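/- Let d ≥ 2, n ≥ 2, let ω : ℝ → ℝ^d be C^1, let k_2, …, k_n ∈ ℤ^{d−1} and let φ_2, …, φ_n : ℝ → ℝ be C^1, and define H_n(θ, r) = ⟨ω(r_d), r⟩ − Σ_{j=2}^n φ_j(r_d) sin(2π⟨k_j, θ̃⟩). Suppose s ∈ ℝ satisfies ⟨ω̃(s), k_n⟩ = 0, k_n ≠ 0, φ_n(s) ≠ 0, and ⟨ω̃(s), k_j⟩ ≠ 0 for 2 ≤ j ≤ n−1. Then the solution (θ(t), r(t)) of Hamilton's equations for H_n with initial condition θ(0) = 0, r(0) = (0, …, 0, s) is defined for all t and satisfies r̃(t) = 2π φ_n(s) t · k_n + B(t) with B : ℝ → ℝ^{d−1} bounded; in particular sup_{t>0} ‖r̃(t)‖ = ∞. -/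

import Mathlib

open Real Filter Set

noncomputable section

/-- The phase space `T^d × ℝ^d`, realized as pairs `(θ, r)` of functions `Fin d → ℝ`. -/
abbrev Phase (d : ℕ) := (Fin d → ℝ) × (Fin d → ℝ)

/-- `H` is `ℤ^d`-periodic in the angle variable `θ`. -/
def PeriodicTheta {d : ℕ} (H : Phase d → ℝ) : Prop :=
  ∀ (θ r : Fin d → ℝ) (m : Fin d → ℤ), H (fun i => θ i + (m i : ℝ), r) = H (θ, r)

/-- `H` is real entire: it is the restriction to `ℝ^d × ℝ^d` of a holomorphic
function on `ℂ^d × ℂ^d`. -/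
def RealEntire {d : ℕ} (H : Phase d → ℝ) : Prop :=
  ∃ F : (Fin d → ℂ) × (Fin d → ℂ) → ℂ, Differentiable ℂ F ∧
    ∀ θ r : Fin d → ℝ, F (fun i => (θ i : ℂ), fun i => (r i : ℂ)) = H (θ, r)

/-- `H` is of the form `(*)` with frequency `ω`:
`|H(θ,r) − ⟨ω,r⟩| ≤ C‖r‖²` for all `θ` and all `‖r‖ ≤ δ`. -/
def FormStar {d : ℕ} (H : Phase d → ℝ) (ω : Fin d → ℝ) : Prop :=
  ∃ C δ : ℝ, 0 < C ∧ 0 < δ ∧ ∀ θ r : Fin d → ℝ, ‖r‖ ≤ δ →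
    |H (θ, r) - ∑ i, ω i * r i| ≤ C * ‖r‖ ^ 2

/-- `(θ, r)` is a solution of Hamilton's equations for `H` on the set `J`:
`θ' = ∂H/∂r`, `r' = −∂H/∂θ`. -/
def IsSolutionOn {d : ℕ} (H : Phase d → ℝ) (θ r : ℝ → Fin d → ℝ) (J : Set ℝ) : Prop :=
  ∀ t ∈ J, ∀ i : Fin d,
    HasDerivWithinAt (fun u => θ u i) (fderiv ℝ H (θ t, r t) (0, Pi.single i 1)) J t ∧
    HasDerivWithinAt (fun u => r u i) (-(fderiv ℝ H (θ t, r t) (Pi.single i 1, 0))) J t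

/-- Embedding of the first `d − 1` indices into `Fin d`. -/
def emb (d : ℕ) : Fin (d - 1) → Fin d := Fin.castLE (Nat.sub_le d 1)

/-- The last index of `Fin d`. -/
def lst (d : ℕ) (hd : 0 < d) : Fin d := ⟨d - 1, Nat.sub_lt hd Nat.one_pos⟩

/-- `⟨ω̃(s), k_j⟩ = Σ_{i=1}^{d−1} ω_i(s) k_{j,i}`. -/
def Aj (d : ℕ) (ω : ℝ → Fin d → ℝ) (k : ℕ → Fin (d - 1) → ℤ) (j : ℕ) (s : ℝ) : ℝ :=
  ∑ i, ω s (emb d i) * (k j i : ℝ)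

/-- `H_n(θ, r) = ⟨ω(r_d), r⟩ − Σ_{j=2}^n φ_j(r_d) sin(2π⟨k_j, θ̃⟩)`. -/
def Hn (d n : ℕ) (hd : 0 < d) (ω : ℝ → Fin d → ℝ) (k : ℕ → Fin (d - 1) → ℤ)
    (φ : ℕ → ℝ → ℝ) (z : Phase d) : ℝ :=
  (∑ i, ω (z.2 (lst d hd)) i * z.2 i) -
    ∑ j ∈ Finset.Icc 2 n, φ j (z.2 (lst d hd)) *
      Real.sin (2 * π * ∑ i, (k j i : ℝ) * z.1 (emb d i))

/-- `H_0(θ, r) = ⟨ω(r_d), r⟩`. -/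
def H0 (d : ℕ) (hd : 0 < d) (ω : ℝ → Fin d → ℝ) (z : Phase d) : ℝ :=
  ∑ i, ω (z.2 (lst d hd)) i * z.2 i

/-- The map `Ψ_n(θ, r) = (θ̃, θ_d − (1/2π) Σ_j (d/ds)[φ_j(s)/⟨ω̃(s), k_j⟩] cos(2π⟨k_j, θ̃⟩),
r̃ − Σ_j (φ_j(s)/⟨ω̃(s), k_j⟩) sin(2π⟨k_j, θ̃⟩) k_j, s)`, with `s = r_d`. -/
def Psin (d n : ℕ) (hd : 0 < d) (ω : ℝ → Fin d → ℝ) (k : ℕ → Fin (d - 1) → ℤ)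
    (φ : ℕ → ℝ → ℝ) (z : Phase d) : Phase d :=
  (fun i => if i = lst d hd then
      z.1 (lst d hd) - (1 / (2 * π)) * ∑ j ∈ Finset.Icc 2 n,
        deriv (fun s => φ j s / Aj d ω k j s) (z.2 (lst d hd)) *
          Real.cos (2 * π * ∑ i', (k j i' : ℝ) * z.1 (emb d i'))
    else z.1 i,
   fun i => if h : (i : ℕ) < d - 1 then
      z.2 i - ∑ j ∈ Finset.Icc 2 n,
        (φ j (z.2 (lst d hd)) / Aj d ω k j (z.2 (lst d hd))) *
          Real.sin (2 * π * ∑ i', (k j i' : ℝ) * z.1 (emb d i')) * (k j ⟨i, h⟩ : ℝ)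
    else z.2 i)

/-!
`H_n` does not depend on `θ_d`, so `r_d ≡ s` is conserved and `θ̃' = ω̃(s)` makes the angles
rotate linearly, `θ̃(t) = ω̃(s) t`. Along this motion
`r̃' = 2π Σ_j φ_j(s) cos(2π⟨k_j, ω̃(s)⟩ t) k_j` integrates in closed form: every non-resonant
term (`⟨ω̃(s), k_j⟩ ≠ 0`) contributes a bounded oscillation, while the resonant term `j = n`
contributes the drift `2π φ_n(s) t k_n`. Since `∂H_n/∂r_d` does not involve `θ_d` either,
`θ_d` is then obtained by quadrature.
-/

namespace ResonantDrift

section Coordinates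

variable {d : ℕ}

lemma emb_ne_lst (hd : 0 < d) (i : Fin (d - 1)) : emb d i ≠ lst d hd := by
  intro h
  have := congrArg Fin.val h
  simp only [emb, lst, Fin.val_castLE] at this
  omega

lemma eq_lst_or_exists_emb_eq (hd : 0 < d) (i : Fin d) : i = lst d hd ∨ ∃ i', emb d i' = i := by
  by_cases h : (i : ℕ) < d - 1
  · exact Or.inr ⟨⟨i, h⟩, rfl⟩
  · exact Or.inl (Fin.ext (by simp only [lst]; omega))

def join (x : Fin (d - 1) → ℝ) (y : ℝ) : Fin d → ℝ :=
  fun i => if h : (i : ℕ) < d - 1 then x ⟨i, h⟩ else y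

@[simp] lemma join_emb (x : Fin (d - 1) → ℝ) (y : ℝ) (i : Fin (d - 1)) :
    join x y (emb d i) = x i :=
  dif_pos i.isLt

@[simp] lemma join_lst (hd : 0 < d) (x : Fin (d - 1) → ℝ) (y : ℝ) :
    join x y (lst d hd) = y :=
  dif_neg (by simp [lst])

/-- `θ ↦ 2π⟨k_j, θ̃⟩`. -/
def phase (k : ℕ → Fin (d - 1) → ℤ) (j : ℕ) : (Fin d → ℝ) →L[ℝ] ℝ :=
  ∑ i, (2 * π * (k j i : ℝ)) • ContinuousLinearMap.proj (emb d i)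

lemma phase_apply (k : ℕ → Fin (d - 1) → ℤ) (j : ℕ) (θ : Fin d → ℝ) :
    phase k j θ = 2 * π * ∑ i, (k j i : ℝ) * θ (emb d i) := by
  simp [phase, Finset.mul_sum, mul_assoc]

lemma phase_single_lst (hd : 0 < d) (k : ℕ → Fin (d - 1) → ℤ) (j : ℕ) :
    phase k j (Pi.single (lst d hd) 1) = 0 := by
  simp [phase_apply, emb_ne_lst hd]

lemma phase_single_emb (k : ℕ → Fin (d - 1) → ℤ) (j : ℕ) (i : Fin (d - 1)) :
    phase k j (Pi.single (emb d i) 1) = 2 * π * k j i := by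
  have : Function.Injective (emb d) := Fin.castLE_injective _
  simp [phase_apply, Pi.single_apply, this.eq_iff]

lemma continuous_join {x : ℝ → Fin (d - 1) → ℝ} {y : ℝ → ℝ} (hx : Continuous x)
    (hy : Continuous y) :
    Continuous fun t => join (x t) (y t) := by
  refine continuous_pi fun i => ?_
  unfold join
  split_ifs
  exacts [(continuous_apply _).comp hx, hy]

lemma join_zero_left (hd : 0 < d) (y : ℝ) :
    join (0 : Fin (d - 1) → ℝ) y = fun i => if i = lst d hd then y else 0 := by
  funext i
  obtain rfl | ⟨i, rfl⟩ := eq_lst_or_exists_emb_eq hd i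
  · simp
  · simp [emb_ne_lst hd]

end Coordinates

/-- Equal to `sin (a t) / a` for `a ≠ 0` and to `t` for `a = 0`. -/
def cosPrimitive (a t : ℝ) : ℝ := ∫ u in (0 : ℝ)..t, cos (a * u)

lemma hasDerivAt_cosPrimitive (a t : ℝ) : HasDerivAt (cosPrimitive a) (cos (a * t)) t :=
  (Continuous.integral_hasStrictDerivAt (by fun_prop) 0 t).hasDerivAt

lemma continuous_cosPrimitive (a : ℝ) : Continuous (cosPrimitive a) :=
  continuous_iff_continuousAt.mpr fun t => (hasDerivAt_cosPrimitive a t).continuousAt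

@[simp] lemma cosPrimitive_zero_right (a : ℝ) : cosPrimitive a 0 = 0 := by
  simp [cosPrimitive]

@[simp] lemma cosPrimitive_zero_left (t : ℝ) : cosPrimitive 0 t = t := by
  simp [cosPrimitive]

lemma abs_cosPrimitive_le {a : ℝ} (ha : a ≠ 0) (t : ℝ) : |cosPrimitive a t| ≤ |a|⁻¹ := by
  have h : a * cosPrimitive a t = sin (a * t) := by
    rw [cosPrimitive, intervalIntegral.mul_integral_comp_mul_left, integral_cos, mul_zero, sin_zero,
      sub_zero]
  rw [eq_div_of_mul_eq ha ((mul_comm _ _).trans h), abs_div, ← one_div]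
  exact div_le_div_of_nonneg_right (abs_sin_le_one _) (abs_nonneg a)

lemma exists_pos_lt_norm_smul_add {E : Type*} [NormedAddCommGroup E] [NormedSpace ℝ E] {v : E}
    (hv : v ≠ 0) {B : ℝ → E} {C : ℝ} (hB : ∀ t, ‖B t‖ ≤ C) (M : ℝ) :
    ∃ t, 0 < t ∧ M < ‖t • v + B t‖ := by
  have hv' : 0 < ‖v‖ := norm_pos_iff.mpr hv
  set t := (|M| + |C| + 1) / ‖v‖
  have ht : 0 < t := by positivity
  refine ⟨t, ht, ?_⟩
  have htv : ‖t • v‖ = |M| + |C| + 1 := by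
    rw [norm_smul, Real.norm_of_nonneg ht.le, div_mul_cancel₀ _ hv'.ne']
  have := norm_sub_le_norm_add (t • v) (B t)
  linarith [hB t, le_abs_self M, le_abs_self C]

section Hamiltonian

variable {d n : ℕ} (hd : 0 < d) {ω : ℝ → Fin d → ℝ} (k : ℕ → Fin (d - 1) → ℤ) {φ : ℕ → ℝ → ℝ}

lemma fderiv_Hn_apply (hω : Differentiable ℝ ω) (hφ : ∀ j ∈ Finset.Icc 2 n, Differentiable ℝ (φ j))
    (z v : Phase d) :
    fderiv ℝ (Hn d n hd ω k φ) z v =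
      (∑ i, (ω (z.2 (lst d hd)) i * v.2 i +
        z.2 i * (deriv (fun s => ω s i) (z.2 (lst d hd)) * v.2 (lst d hd)))) -
      ∑ j ∈ Finset.Icc 2 n, (φ j (z.2 (lst d hd)) * (cos (phase k j z.1) * phase k j v.1) +
        sin (phase k j z.1) * (deriv (φ j) (z.2 (lst d hd)) * v.2 (lst d hd))) := by
  set L := lst d hd
  let π₁ := ContinuousLinearMap.fst ℝ (Fin d → ℝ) (Fin d → ℝ)
  let π₂ := ContinuousLinearMap.snd ℝ (Fin d → ℝ) (Fin d → ℝ)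
  have hr : ∀ i, HasFDerivAt (fun z : Phase d => z.2 i) ((ContinuousLinearMap.proj i).comp π₂) z :=
    fun i => ((ContinuousLinearMap.proj i).comp π₂).hasFDerivAt
  have hωi : ∀ i, Differentiable ℝ (fun s => ω s i) := differentiable_pi.mp hω
  have hH := (HasFDerivAt.fun_sum (u := Finset.univ) fun i _ =>
      ((hωi i (z.2 L)).hasDerivAt.comp_hasFDerivAt z (hr L)).mul (hr i)).sub
    (HasFDerivAt.fun_sum fun j hj =>
      (((hφ j hj) (z.2 L)).hasDerivAt.comp_hasFDerivAt z (hr L)).mul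
        ((hasDerivAt_sin _).comp_hasFDerivAt z ((phase k j).comp π₁).hasFDerivAt))
  rw [(hH.congr_of_eventuallyEq (.of_forall fun z => by simp [Hn, phase_apply, π₁, L])).fderiv]
  simp [π₁, π₂, smul_eq_mul, mul_comm]

lemma fderiv_Hn_angle_lst (hω : Differentiable ℝ ω)
    (hφ : ∀ j ∈ Finset.Icc 2 n, Differentiable ℝ (φ j)) (z : Phase d) :
    fderiv ℝ (Hn d n hd ω k φ) z (Pi.single (lst d hd) 1, 0) = 0 := by
  simp [fderiv_Hn_apply hd k hω hφ, phase_single_lst]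

lemma fderiv_Hn_angle_emb (hω : Differentiable ℝ ω)
    (hφ : ∀ j ∈ Finset.Icc 2 n, Differentiable ℝ (φ j)) (z : Phase d) (i : Fin (d - 1)) :
    fderiv ℝ (Hn d n hd ω k φ) z (Pi.single (emb d i) 1, 0) =
      -∑ j ∈ Finset.Icc 2 n, φ j (z.2 (lst d hd)) * cos (phase k j z.1) * (2 * π * k j i) := by
  simp [fderiv_Hn_apply hd k hω hφ, phase_single_emb, mul_assoc]

lemma fderiv_Hn_action_emb (hω : Differentiable ℝ ω)
    (hφ : ∀ j ∈ Finset.Icc 2 n, Differentiable ℝ (φ j)) (z : Phase d) (i : Fin (d - 1)) :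
    fderiv ℝ (Hn d n hd ω k φ) z (0, Pi.single (emb d i) 1) = ω (z.2 (lst d hd)) (emb d i) := by
  simp [fderiv_Hn_apply hd k hω hφ, (emb_ne_lst hd i).symm, Pi.single_apply]

lemma fderiv_Hn_action_lst (hω : Differentiable ℝ ω)
    (hφ : ∀ j ∈ Finset.Icc 2 n, Differentiable ℝ (φ j)) (z : Phase d) :
    fderiv ℝ (Hn d n hd ω k φ) z (0, Pi.single (lst d hd) 1) =
      ω (z.2 (lst d hd)) (lst d hd) + (∑ i, z.2 i * deriv (fun s => ω s i) (z.2 (lst d hd))) -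
        ∑ j ∈ Finset.Icc 2 n, sin (phase k j z.1) * deriv (φ j) (z.2 (lst d hd)) := by
  simp [fderiv_Hn_apply hd k hω hφ, Finset.sum_add_distrib, Pi.single_apply]

end Hamiltonian

section Solution

variable {d : ℕ} (hd : 0 < d) (n : ℕ) (ω : ℝ → Fin d → ℝ) (k : ℕ → Fin (d - 1) → ℤ)
  (φ : ℕ → ℝ → ℝ) (s : ℝ)

def actionSol (t : ℝ) : Fin d → ℝ :=
  join (∑ j ∈ Finset.Icc 2 n,
    (2 * π * φ j s * cosPrimitive (2 * π * Aj d ω k j s) t) • fun i => (k j i : ℝ)) s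

/-- `∂H_n/∂r_d` along the solution, which does not involve `θ_d`. -/
def angleRate (u : ℝ) : ℝ :=
  ω s (lst d hd) + (∑ i, actionSol n ω k φ s u i * deriv (fun s => ω s i) s) -
    ∑ j ∈ Finset.Icc 2 n, sin (2 * π * Aj d ω k j s * u) * deriv (φ j) s

def angleSol (t : ℝ) : Fin d → ℝ :=
  join (fun i => ω s (emb d i) * t) (∫ u in (0 : ℝ)..t, angleRate hd n ω k φ s u)

lemma actionSol_emb (t : ℝ) (i : Fin (d - 1)) :
    actionSol n ω k φ s t (emb d i) =
      ∑ j ∈ Finset.Icc 2 n, 2 * π * φ j s * cosPrimitive (2 * π * Aj d ω k j s) t * k j i := by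
  simp [actionSol]

lemma actionSol_lst (t : ℝ) : actionSol n ω k φ s t (lst d hd) = s := by
  simp [actionSol]

lemma phase_angleSol (j : ℕ) (t : ℝ) :
    phase k j (angleSol hd n ω k φ s t) = 2 * π * Aj d ω k j s * t := by
  simp only [phase_apply, angleSol, join_emb, Aj, Finset.mul_sum, Finset.sum_mul]
  exact Finset.sum_congr rfl fun i _ => by ring

lemma continuous_actionSol : Continuous (actionSol n ω k φ s) :=
  continuous_join (continuous_finsetSum _ fun _ _ =>
    (continuous_const.mul (continuous_cosPrimitive _)).smul continuous_const) continuous_const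

lemma continuous_angleRate : Continuous (angleRate hd n ω k φ s) := by
  have := continuous_pi_iff.mp (continuous_actionSol n ω k φ s)
  unfold angleRate
  fun_prop

variable {n ω k φ} in
lemma isSolutionOn_angleSol_actionSol (hω : Differentiable ℝ ω)
    (hφ : ∀ j ∈ Finset.Icc 2 n, Differentiable ℝ (φ j)) :
    IsSolutionOn (Hn d n hd ω k φ) (angleSol hd n ω k φ s) (actionSol n ω k φ s) univ := by
  intro t _ i
  simp only [hasDerivWithinAt_univ]
  obtain rfl | ⟨i, rfl⟩ := eq_lst_or_exists_emb_eq hd i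
  · constructor
    · rw [fderiv_Hn_action_lst hd k hω hφ]
      simp only [actionSol_lst, phase_angleSol]
      simp only [angleSol, join_lst]
      exact ((continuous_angleRate hd n ω k φ s).integral_hasStrictDerivAt 0 t).hasDerivAt
    · simp only [actionSol_lst, fderiv_Hn_angle_lst hd k hω hφ, neg_zero]
      exact hasDerivAt_const t s
  · constructor
    · simp only [angleSol, join_emb, fderiv_Hn_action_emb hd k hω hφ, actionSol_lst]
      simpa using (hasDerivAt_id t).const_mul (ω s (emb d i))
    · simp only [actionSol_emb, fderiv_Hn_angle_emb hd k hω hφ, actionSol_lst, phase_angleSol,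
        neg_neg]
      convert HasDerivAt.fun_sum fun j _ =>
        ((hasDerivAt_cosPrimitive (2 * π * Aj d ω k j s) t).const_mul (2 * π * φ j s)).mul_const
          (k j i : ℝ) using 1
      exact Finset.sum_congr rfl fun j _ => by ring

lemma angleSol_zero : angleSol hd n ω k φ s 0 = 0 := by
  simp [angleSol, Pi.zero_def.symm, join_zero_left hd]

lemma actionSol_zero : actionSol n ω k φ s 0 = fun i => if i = lst d hd then s else 0 := by
  simp [actionSol, join_zero_left hd]

def oscillation (t : ℝ) : Fin (d - 1) → ℝ :=
  ∑ j ∈ Finset.Icc 2 (n - 1),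
    (2 * π * φ j s * cosPrimitive (2 * π * Aj d ω k j s) t) • fun i => (k j i : ℝ)

variable {n ω k φ s} in
lemma actionSol_comp_emb (hn : 2 ≤ n) (hAn : Aj d ω k n s = 0) (t : ℝ) :
    (fun i => actionSol n ω k φ s t (emb d i)) =
      t • (fun i => 2 * π * φ n s * k n i) + oscillation n ω k φ s t := by
  funext i
  obtain ⟨m, rfl⟩ : ∃ m, n = m + 1 := ⟨n - 1, by omega⟩
  simp only [actionSol_emb, oscillation, Finset.sum_Icc_succ_top (by omega : 2 ≤ m + 1), hAn,
    add_tsub_cancel_right, mul_zero, cosPrimitive_zero_left, Pi.add_apply, Pi.smul_apply,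
    Finset.sum_apply, smul_eq_mul]
  ring

variable {n ω k φ s} in
lemma norm_oscillation_le (hA : ∀ j ∈ Finset.Icc 2 (n - 1), Aj d ω k j s ≠ 0) (t : ℝ) :
    ‖oscillation n ω k φ s t‖ ≤ ∑ j ∈ Finset.Icc 2 (n - 1),
      |2 * π * φ j s| * |2 * π * Aj d ω k j s|⁻¹ * ‖fun i => (k j i : ℝ)‖ := by
  refine (norm_sum_le _ _).trans (Finset.sum_le_sum fun j hj => ?_)
  rw [norm_smul, Real.norm_eq_abs, abs_mul]
  gcongr
  exact abs_cosPrimitive_le (by simpa [pi_ne_zero] using hA j hj) t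

end Solution

end ResonantDrift

open ResonantDrift

/-- Suppose `⟨ω̃(s), k_n⟩ = 0` with `k_n ≠ 0`, `φ_n(s) ≠ 0`, and
`⟨ω̃(s), k_j⟩ ≠ 0` for `2 ≤ j ≤ n − 1`. Then the solution of Hamilton's equations
for `H_n` with initial condition `θ(0) = 0`, `r(0) = (0, …, 0, s)` is defined for all
`t` and satisfies `r̃(t) = 2π φ_n(s) t k_n + B(t)` with `B` bounded; in particular
`sup_{t>0} ‖r̃(t)‖ = ∞`. -/
theorem statement18 (d n : ℕ) (hd : 2 ≤ d) (hn : 2 ≤ n)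
    (ω : ℝ → Fin d → ℝ) (hω : ContDiff ℝ 1 ω)
    (k : ℕ → Fin (d - 1) → ℤ)
    (φ : ℕ → ℝ → ℝ) (hφ : ∀ j ∈ Finset.Icc 2 n, ContDiff ℝ 1 (φ j))
    (s : ℝ) (hkn : k n ≠ 0) (hφn : φ n s ≠ 0)
    (hAn : Aj d ω k n s = 0)
    (hAj : ∀ j ∈ Finset.Icc 2 (n - 1), Aj d ω k j s ≠ 0) :
    ∃ (θ r : ℝ → Fin d → ℝ) (B : ℝ → Fin (d - 1) → ℝ),
      IsSolutionOn (Hn d n (by omega) ω k φ) θ r Set.univ ∧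
      θ 0 = 0 ∧
      r 0 = (fun i => if i = lst d (by omega) then s else 0) ∧
      (∃ M : ℝ, ∀ t : ℝ, ‖B t‖ ≤ M) ∧
      (∀ t : ℝ, ∀ i : Fin (d - 1),
        r t (emb d i) = 2 * π * φ n s * t * (k n i : ℝ) + B t i) ∧
      (∀ M : ℝ, ∃ t : ℝ, 0 < t ∧ M < ‖fun i : Fin (d - 1) => r t (emb d i)‖) := by
  have hd' : 0 < d := by omega
  have hv : (fun i => 2 * π * φ n s * k n i) ≠ 0 := fun h => hkn <| funext fun i => by
    simpa [hφn, pi_ne_zero] using congrFun h i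
  obtain ⟨C, hC⟩ : ∃ C, ∀ t, ‖oscillation n ω k φ s t‖ ≤ C := ⟨_, norm_oscillation_le hAj⟩
  refine ⟨angleSol hd' n ω k φ s, actionSol n ω k φ s, oscillation n ω k φ s,
    isSolutionOn_angleSol_actionSol hd' s (hω.differentiable one_ne_zero)
      fun j hj => (hφ j hj).differentiable one_ne_zero,
    angleSol_zero .., actionSol_zero .., ⟨C, hC⟩, fun t i => ?_, fun M => ?_⟩
  · rw [congrFun (actionSol_comp_emb (φ := φ) hn hAn t) i]
    simp only [Pi.add_apply, Pi.smul_apply, smul_eq_mul]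
    ring
  · simpa only [actionSol_comp_emb (φ := φ) hn hAn] using exists_pos_lt_norm_smul_add hv hC M
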